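/- arXiv:math/0503497 — 4 statements merged into one kernel-verified Lean document; each statement's English description precedes it below -/
import Mathlib

section
/- Let ζ = γ + iδ be a complex number with γ = Re ζ > 0, and let v = C₊ φ_ζ^+ + C₋ φ_ζ^− for complex numbers C₊, C₋. Then [v'](1) = −(2ζ/(1 − e^{−4ζ}))·(v(1) − e^{−2ζ} v(−1)) and [v'](−1) = −(2ζ/(1 − e^{−4ζ}))·(v(−1) − e^{−2ζ} v(1)). -/
open Set Filter

/-- The function `φ_ζ^+`. -/
noncomputable def phiP (ζ : ℂ) (x : ℝ) : ℂ :=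
  if x < -1 then 0
  else if x ≤ 1 then Complex.sinh (ζ * (x + 1)) / Complex.sinh (2 * ζ)
  else Complex.exp (-ζ * (x - 1))

/-- The function `φ_ζ^−(x) = φ_ζ^+(−x)`. -/
noncomputable def phiM (ζ : ℂ) (x : ℝ) : ℂ := phiP ζ (-x)

/-- `f` has one-sided derivatives at `a` and the jump `f'(a+) − f'(a−)` equals `j`. -/
def DerivJump (f : ℝ → ℂ) (a : ℝ) (j : ℂ) : Prop :=
  ∃ dp dm : ℂ, HasDerivWithinAt f dp (Set.Ici a) a ∧
    HasDerivWithinAt f dm (Set.Iic a) a ∧ j = dp - dm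

lemma exp4_ne (ζ : ℂ) (hγ : 0 < ζ.re) : Complex.exp (4 * ζ) ≠ 1 := by
  intro h
  have h2 := congrArg norm h
  rw [Complex.norm_exp] at h2
  simp only [norm_one] at h2
  have h3 : Real.exp ((4 * ζ).re) = Real.exp 0 := by rw [h2, Real.exp_zero]
  have h4 := Real.exp_injective h3
  simp [Complex.mul_re] at h4
  linarith

lemma sinh_ne (ζ : ℂ) (hγ : 0 < ζ.re) : Complex.sinh (2 * ζ) ≠ 0 := by
  intro h
  have h0 : (Complex.exp (2 * ζ) - Complex.exp (-(2 * ζ))) / 2 = 0 := h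
  have h1 : Complex.exp (2 * ζ) = Complex.exp (-(2 * ζ)) := by
    field_simp at h0
    exact sub_eq_zero.mp (by rw [mul_zero] at h0; exact h0)
  have h2 : Complex.exp (4 * ζ) = 1 := by
    have := congrArg (· * Complex.exp (2 * ζ)) h1
    simp only [← Complex.exp_add] at this
    rw [show 2 * ζ + 2 * ζ = 4 * ζ by ring, show -(2*ζ) + 2 * ζ = 0 by ring,
      Complex.exp_zero] at this
    exact this
  exact exp4_ne ζ hγ h2

lemma one_sub_ne (ζ : ℂ) (hγ : 0 < ζ.re) : 1 - Complex.exp (-(4 * ζ)) ≠ 0 := by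
  intro h
  have h1 : Complex.exp (-(4 * ζ)) = 1 := by linear_combination -h
  have : Complex.exp (4 * ζ) = 1 := by
    have := congrArg (· * Complex.exp (4 * ζ)) h1
    simpa [← Complex.exp_add] using this.symm
  exact exp4_ne ζ hγ this

-- branch lemmas
lemma phiP_of_lt (ζ : ℂ) {x : ℝ} (hx : x < -1) : phiP ζ x = 0 := if_pos hx

lemma phiP_of_mem (ζ : ℂ) {x : ℝ} (h1 : -1 ≤ x) (h2 : x ≤ 1) :
    phiP ζ x = Complex.sinh (ζ * (x + 1)) / Complex.sinh (2 * ζ) := by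
  rw [phiP, if_neg (not_lt.2 h1), if_pos h2]

lemma phiP_of_gt (ζ : ℂ) {x : ℝ} (hx : 1 < x) :
    phiP ζ x = Complex.exp (-ζ * (x - 1)) := by
  rw [phiP, if_neg (by push_neg; linarith), if_neg (not_le.2 hx)]

lemma phiP_one (ζ : ℂ) (hγ : 0 < ζ.re) : phiP ζ 1 = 1 := by
  rw [phiP_of_mem ζ (by norm_num) le_rfl,
    show ζ * (((1:ℝ):ℂ) + 1) = 2 * ζ by push_cast; ring]
  exact div_self (sinh_ne ζ hγ)

lemma phiP_neg_one (ζ : ℂ) : phiP ζ (-1) = 0 := by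
  rw [phiP_of_mem ζ le_rfl (by norm_num),
    show ζ * (((-1:ℝ):ℂ) + 1) = 0 by push_cast; ring]
  simp

lemma hE (ζ : ℂ) (a : ℝ) :
    HasDerivAt (fun x : ℝ => Complex.exp (-ζ * (x - 1)))
      (-ζ * Complex.exp (-ζ * ((a : ℂ) - 1))) a := by
  have h1 : HasDerivAt (fun w : ℂ => -ζ * (w - 1)) (-ζ) (a : ℂ) := by
    simpa using ((hasDerivAt_id (a : ℂ)).sub_const 1).const_mul (-ζ)
  have h2 : HasDerivAt (fun w : ℂ => Complex.exp (-ζ * (w - 1)))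
      (-ζ * Complex.exp (-ζ * ((a : ℂ) - 1))) (a : ℂ) := by
    simpa [mul_comm, Function.comp_def] using (Complex.hasDerivAt_exp (-ζ * ((a : ℂ) - 1))).comp (a : ℂ) h1
  exact h2.comp_ofReal

lemma hS (ζ : ℂ) (a : ℝ) :
    HasDerivAt (fun x : ℝ => Complex.sinh (ζ * (x + 1)) / Complex.sinh (2 * ζ))
      (ζ * Complex.cosh (ζ * ((a : ℂ) + 1)) / Complex.sinh (2 * ζ)) a := by
  have h1 : HasDerivAt (fun w : ℂ => ζ * (w + 1)) ζ (a : ℂ) := by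
    simpa using ((hasDerivAt_id (a : ℂ)).add_const 1).const_mul ζ
  have h2 : HasDerivAt (fun w : ℂ => Complex.sinh (ζ * (w + 1)) / Complex.sinh (2 * ζ))
      (ζ * Complex.cosh (ζ * ((a : ℂ) + 1)) / Complex.sinh (2 * ζ)) (a : ℂ) := by
    have := ((Complex.hasDerivAt_sinh (ζ * ((a : ℂ) + 1))).comp (a : ℂ) h1).div_const
      (Complex.sinh (2 * ζ))
    simpa [mul_comm] using this
  exact h2.comp_ofReal

lemma phiP_right_one (ζ : ℂ) (hγ : 0 < ζ.re) :
    HasDerivWithinAt (phiP ζ) (-ζ) (Set.Ici 1) 1 := by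
  have h : HasDerivWithinAt (phiP ζ) (-ζ * Complex.exp (-ζ * (((1:ℝ):ℂ) - 1)))
      (Set.Ici 1) 1 := by
    apply ((hE ζ 1).hasDerivWithinAt (s := Set.Ici (1:ℝ))).congr
    · intro x hx
      rcases eq_or_lt_of_le (Set.mem_Ici.mp hx : (1:ℝ) ≤ x) with h1 | h1
      · subst h1
        rw [phiP_one ζ hγ]
        norm_num
      · rw [phiP_of_gt ζ h1]
    · rw [phiP_one ζ hγ]; norm_num
  simpa using h

lemma phiP_left_one (ζ : ℂ) (hγ : 0 < ζ.re) :
    HasDerivWithinAt (phiP ζ) (ζ * Complex.cosh (2 * ζ) / Complex.sinh (2 * ζ))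
      (Set.Iic 1) 1 := by
  have h : HasDerivWithinAt (phiP ζ) (ζ * Complex.cosh (ζ * (((1:ℝ):ℂ) + 1)) / Complex.sinh (2*ζ))
      (Set.Iic 1) 1 := by
    apply ((hS ζ 1).hasDerivWithinAt (s := Set.Iic (1:ℝ))).congr_of_eventuallyEq
    · have hmem : Set.Ioi (-1:ℝ) ∈ nhdsWithin (1:ℝ) (Set.Iic 1) :=
        nhdsWithin_le_nhds (Ioi_mem_nhds (by norm_num))
      filter_upwards [hmem, self_mem_nhdsWithin] with x hx1 hx2
      exact phiP_of_mem ζ (le_of_lt hx1) hx2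
    · exact phiP_of_mem ζ (by norm_num) le_rfl
  rw [show ζ * (((1:ℝ):ℂ) + 1) = 2 * ζ by push_cast; ring] at h
  exact h

lemma phiP_right_neg_one (ζ : ℂ) (hγ : 0 < ζ.re) :
    HasDerivWithinAt (phiP ζ) (ζ / Complex.sinh (2 * ζ)) (Set.Ici (-1)) (-1) := by
  have h : HasDerivWithinAt (phiP ζ)
      (ζ * Complex.cosh (ζ * (((-1:ℝ):ℂ) + 1)) / Complex.sinh (2*ζ)) (Set.Ici (-1)) (-1) := by
    apply ((hS ζ (-1)).hasDerivWithinAt (s := Set.Ici (-1:ℝ))).congr_of_eventuallyEq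
    · have hmem : Set.Iio (1:ℝ) ∈ nhdsWithin (-1:ℝ) (Set.Ici (-1)) :=
        nhdsWithin_le_nhds (Iio_mem_nhds (by norm_num))
      filter_upwards [hmem, self_mem_nhdsWithin] with x hx1 hx2
      exact phiP_of_mem ζ hx2 (le_of_lt hx1)
    · exact phiP_of_mem ζ le_rfl (by norm_num)
  rw [show ζ * (((-1:ℝ):ℂ) + 1) = 0 by push_cast; ring, Complex.cosh_zero, mul_one] at h
  exact h

lemma phiP_left_neg_one (ζ : ℂ) :
    HasDerivWithinAt (phiP ζ) 0 (Set.Iic (-1)) (-1) := by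
  have h0 := hasDerivWithinAt_const (-1:ℝ) (Set.Iic (-1:ℝ)) (0:ℂ)
  apply h0.congr
  · intro x hx
    have hx' : x ≤ -1 := hx
    rcases hx'.lt_or_eq with h1 | h1
    · rw [phiP_of_lt ζ h1]
    · subst h1; rw [phiP_neg_one]
  · rw [phiP_neg_one]

-- phiM derivatives via negation
lemma phiM_right (ζ : ℂ) {d : ℂ} {a : ℝ}
    (h : HasDerivWithinAt (phiP ζ) d (Set.Iic (-a)) (-a)) :
    HasDerivWithinAt (phiM ζ) (-d) (Set.Ici a) a := by
  have hneg : HasDerivWithinAt (fun x : ℝ => -x) (-1) (Set.Ici a) a :=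
    (hasDerivAt_neg a).hasDerivWithinAt
  have := HasDerivWithinAt.scomp a (g₁ := phiP ζ) (t' := Set.Iic (-a)) h hneg
    (fun x hx => Set.mem_Iic.mpr (neg_le_neg (Set.mem_Ici.mp hx)))
  rw [show phiM ζ = phiP ζ ∘ Neg.neg from rfl]
  simpa [phiM, Function.comp] using this

lemma phiM_left (ζ : ℂ) {d : ℂ} {a : ℝ}
    (h : HasDerivWithinAt (phiP ζ) d (Set.Ici (-a)) (-a)) :
    HasDerivWithinAt (phiM ζ) (-d) (Set.Iic a) a := by
  have hneg : HasDerivWithinAt (fun x : ℝ => -x) (-1) (Set.Iic a) a :=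
    (hasDerivAt_neg a).hasDerivWithinAt
  have := HasDerivWithinAt.scomp a (g₁ := phiP ζ) (t' := Set.Ici (-a)) h hneg
    (fun x hx => Set.mem_Ici.mpr (neg_le_neg (Set.mem_Iic.mp hx)))
  rw [show phiM ζ = phiP ζ ∘ Neg.neg from rfl]
  simpa [phiM, Function.comp] using this

theorem stmt2 (ζ : ℂ) (hγ : 0 < ζ.re) (Cp Cm : ℂ) :
    DerivJump (fun x => Cp * phiP ζ x + Cm * phiM ζ x) 1
      (-(2 * ζ / (1 - Complex.exp (-(4 * ζ)))) *
        ((Cp * phiP ζ 1 + Cm * phiM ζ 1) -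
          Complex.exp (-(2 * ζ)) * (Cp * phiP ζ (-1) + Cm * phiM ζ (-1)))) ∧
    DerivJump (fun x => Cp * phiP ζ x + Cm * phiM ζ x) (-1)
      (-(2 * ζ / (1 - Complex.exp (-(4 * ζ)))) *
        ((Cp * phiP ζ (-1) + Cm * phiM ζ (-1)) -
          Complex.exp (-(2 * ζ)) * (Cp * phiP ζ 1 + Cm * phiM ζ 1))) := by
  have hs := sinh_ne ζ hγ
  have h1s := one_sub_ne ζ hγ
  have hPone := phiP_one ζ hγ
  have hPneg := phiP_neg_one ζ
  have hMone : phiM ζ 1 = 0 := by rw [phiM]; exact hPneg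
  have hMneg : phiM ζ (-1) = 1 := by rw [phiM]; simpa using hPone
  -- exponential identities
  have hsinh : Complex.sinh (2 * ζ) =
      (Complex.exp (2 * ζ) - Complex.exp (-(2 * ζ))) / 2 := rfl
  have hcosh : Complex.cosh (2 * ζ) =
      (Complex.exp (2 * ζ) + Complex.exp (-(2 * ζ))) / 2 := rfl
  have hAB : Complex.exp (2 * ζ) * Complex.exp (-(2 * ζ)) = 1 := by
    rw [← Complex.exp_add]; simp
  have hA : Complex.exp (2 * ζ) ≠ 0 := Complex.exp_ne_zero _
  have hsub : Complex.exp (2 * ζ) - (Complex.exp (2 * ζ))⁻¹ ≠ 0 := by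
    rw [← Complex.exp_neg]
    intro h
    exact hs (by rw [hsinh, h, zero_div])
  have h1s' : 1 - (Complex.exp (2 * ζ))⁻¹ * (Complex.exp (2 * ζ))⁻¹ ≠ 0 := by
    rw [← Complex.exp_neg, ← Complex.exp_add,
      show -(2*ζ) + -(2*ζ) = -(4*ζ) by ring]
    exact h1s
  have h2 : Complex.exp (2 * ζ) ^ 2 - 1 ≠ 0 := by
    intro h
    apply h1s'
    have hA2 : Complex.exp (2 * ζ) ^ 2 = 1 := by linear_combination h
    rw [← mul_inv, ← sq, hA2]
    simp
  have hB2 : Complex.exp (-(4 * ζ)) = Complex.exp (-(2 * ζ)) * Complex.exp (-(2 * ζ)) := by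
    rw [← Complex.exp_add, show -(2*ζ) + -(2*ζ) = -(4*ζ) by ring]
  have hsubAB : Complex.exp (2 * ζ) - Complex.exp (-(2 * ζ)) ≠ 0 :=
    fun h => hs (by rw [hsinh, h, zero_div])
  have h1s2 : 1 - Complex.exp (-(2 * ζ)) * Complex.exp (-(2 * ζ)) ≠ 0 := by
    rw [← Complex.exp_add, show -(2*ζ) + -(2*ζ) = -(4*ζ) by ring]
    exact h1s
  have h2' : -1 + Complex.exp (ζ * 2) ^ 2 ≠ 0 := by
    rw [mul_comm ζ 2]
    intro h
    exact h2 (by linear_combination h)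
  have h3' : -Complex.exp (ζ * 2) + Complex.exp (ζ * 2) ^ 3 ≠ 0 := by
    have heq : Complex.exp (ζ * 2) * (-1 + Complex.exp (ζ * 2) ^ 2) =
        -Complex.exp (ζ * 2) + Complex.exp (ζ * 2) ^ 3 := by ring
    rw [← heq]
    exact mul_ne_zero (by rw [mul_comm ζ 2]; exact hA) h2'
  constructor
  · refine ⟨Cp * (-ζ) + Cm * (-(0:ℂ)),
      Cp * (ζ * Complex.cosh (2 * ζ) / Complex.sinh (2 * ζ)) +
        Cm * (-(ζ / Complex.sinh (2 * ζ))), ?_, ?_, ?_⟩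
    · exact ((phiP_right_one ζ hγ).const_mul Cp).add
        ((phiM_right ζ (phiP_left_neg_one ζ)).const_mul Cm)
    · exact ((phiP_left_one ζ hγ).const_mul Cp).add
        ((phiM_left ζ (by simpa using phiP_right_neg_one ζ hγ)).const_mul Cm)
    · rw [hPone, hPneg, hMone, hMneg, hsinh, hcosh, hB2]
      field_simp [hsubAB, h1s2, (by rw [sq]; exact h1s2 : (1:ℂ) - Complex.exp (-(2 * ζ)) ^ 2 ≠ 0)]
      linear_combination (2*ζ*Cm - 2*ζ*Cp*Complex.exp (-(2*ζ))) * hAB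
  · refine ⟨Cp * (ζ / Complex.sinh (2 * ζ)) +
        Cm * (-(ζ * Complex.cosh (2 * ζ) / Complex.sinh (2 * ζ))),
      Cp * (0:ℂ) + Cm * (-(-ζ)), ?_, ?_, ?_⟩
    · exact ((phiP_right_neg_one ζ hγ).const_mul Cp).add
        ((phiM_right ζ (by simpa using phiP_left_one ζ hγ)).const_mul Cm)
    · exact ((phiP_left_neg_one ζ).const_mul Cp).add
        ((phiM_left ζ (by simpa using phiP_right_one ζ hγ)).const_mul Cm)
    · rw [hPone, hPneg, hMone, hMneg, hsinh, hcosh, hB2]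
      field_simp [hsubAB, h1s2, (by rw [sq]; exact h1s2 : (1:ℂ) - Complex.exp (-(2 * ζ)) ^ 2 ≠ 0)]
      linear_combination (2*ζ*Cp - 2*ζ*Cm*Complex.exp (-(2*ζ))) * hAB
end

section
/- Let ζ = γ + iδ be a complex number with γ = Re ζ > 0 and δ ≠ 0. Then the squared L²(ℝ) norm of φ_ζ^+ satisfies the exact formula ‖φ_ζ^+‖² = 1/(2γ) + (γ^{−1} sinh(4γ) − δ^{−1} sin(4δ)) / (4 (sinh²(2γ) + sin²(2δ))), and ‖φ_ζ^−‖² = ‖φ_ζ^+‖². -/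
open Set Filter

open MeasureTheory Topology
lemma norm_sinh_sq (z : ℂ) :
    ‖Complex.sinh z‖ ^ 2 = Real.sinh z.re ^ 2 + Real.sin z.im ^ 2 := by
  have hz : z = (z.re : ℂ) + (z.im : ℂ) * Complex.I := (Complex.re_add_im z).symm
  rw [Complex.sq_norm]
  nth_rewrite 1 [hz]
  rw [Complex.sinh_add, Complex.sinh_mul_I, Complex.cosh_mul_I]
  simp only [Complex.normSq_apply, Complex.add_re, Complex.add_im, Complex.mul_re, Complex.mul_im,
    Complex.ofReal_sinh, Complex.ofReal_cosh, Complex.ofReal_cos, Complex.ofReal_sin,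
    Complex.sinh_ofReal_re, Complex.sinh_ofReal_im, Complex.cosh_ofReal_re, Complex.cosh_ofReal_im,
    Complex.cos_ofReal_re, Complex.cos_ofReal_im, Complex.sin_ofReal_re, Complex.sin_ofReal_im,
    Complex.I_re, Complex.I_im]
  have h1 := Real.sin_sq_add_cos_sq z.im
  have h2 := Real.cosh_sq z.re
  nlinarith [Real.sinh_sq z.re]

theorem stmt3 (ζ : ℂ) (hγ : 0 < ζ.re) (hδ : ζ.im ≠ 0) :
    (∫ x : ℝ, ‖phiP ζ x‖ ^ 2) =
      1 / (2 * ζ.re) +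
        ((ζ.re)⁻¹ * Real.sinh (4 * ζ.re) - (ζ.im)⁻¹ * Real.sin (4 * ζ.im)) /
          (4 * (Real.sinh (2 * ζ.re) ^ 2 + Real.sin (2 * ζ.im) ^ 2)) ∧
    (∫ x : ℝ, ‖phiM ζ x‖ ^ 2) = ∫ x : ℝ, ‖phiP ζ x‖ ^ 2 := by
  set a := ζ.re with ha
  set b := ζ.im with hb
  have ha0 : a ≠ 0 := ne_of_gt hγ
  set N : ℝ := Real.sinh (2 * a) ^ 2 + Real.sin (2 * b) ^ 2 with hNdef
  have hN : 0 < N := by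
    have : 0 < Real.sinh (2 * a) := Real.sinh_pos_iff.mpr (by positivity)
    positivity
  have hnormS : ‖Complex.sinh (2 * ζ)‖ ^ 2 = N := by
    rw [norm_sinh_sq]
    simp [hNdef, Complex.mul_re, Complex.mul_im, ha, hb]
  set g : ℝ → ℝ := fun x => ‖phiP ζ x‖ ^ 2 with hgdef
  -- pointwise formulas
  have hre : ∀ x : ℝ, (ζ * ((x : ℂ) + 1)).re = a * (x + 1) := by
    intro x; simp [Complex.mul_re, ha]
  have him : ∀ x : ℝ, (ζ * ((x : ℂ) + 1)).im = b * (x + 1) := by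
    intro x; simp [Complex.mul_im, hb]
  have hg0 : ∀ x ∈ Iic (-1 : ℝ), g x = 0 := by
    intro x hx
    rcases eq_or_lt_of_le (mem_Iic.mp hx) with h | h
    · subst h
      simp [hgdef, phiP]
    · simp [hgdef, phiP, h]
  have hgmid : ∀ x ∈ Icc (-1 : ℝ) 1,
      g x = (Real.sinh (a * (x + 1)) ^ 2 + Real.sin (b * (x + 1)) ^ 2) / N := by
    intro x hx
    have h1 : ¬ x < -1 := not_lt.mpr hx.1
    simp only [hgdef, phiP, h1, if_false, hx.2, if_true]
    rw [norm_div, div_pow, hnormS, norm_sinh_sq, hre, him]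
  have hgright : ∀ x ∈ Ioi (1 : ℝ),
      g x = Real.exp (2 * a) * Real.exp (-(2 * a) * x) := by
    intro x hx
    have hx1 : (1 : ℝ) < x := hx
    have h1 : ¬ x < -1 := by linarith
    have h2 : ¬ x ≤ 1 := not_le.mpr hx1
    simp only [hgdef, phiP, h1, if_false, h2]
    rw [Complex.norm_exp]
    have hre2 : (-ζ * ((x : ℂ) - 1)).re = -(a * (x - 1)) := by
      simp [Complex.mul_re, ha]
      try ring
    rw [hre2, sq, ← Real.exp_add, ← Real.exp_add]
    ring_nf
  -- integrability
  have intRight : IntegrableOn g (Ioi 1) := by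
    refine IntegrableOn.congr_fun
      (f := fun x => Real.exp (2 * a) * Real.exp (-(2 * a) * x)) ?_ ?_ measurableSet_Ioi
    · exact (exp_neg_integrableOn_Ioi 1 (by positivity : (0:ℝ) < 2 * a)).const_mul _
    · intro x hx
      exact (hgright x hx).symm
  have contMid : Continuous fun x : ℝ =>
      (Real.sinh (a * (x + 1)) ^ 2 + Real.sin (b * (x + 1)) ^ 2) / N := by
    fun_prop
  have intLeft : IntegrableOn g (Iic (-1)) := by
    refine (integrableOn_zero).congr_fun ?_ measurableSet_Iic
    intro x hx; exact (hg0 x hx).symm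
  have intMid : IntegrableOn g (Ioc (-1) 1) := by
    refine ((contMid.integrableOn_Icc (a := -1) (b := 1)).mono_set
      Ioc_subset_Icc_self).congr_fun ?_ measurableSet_Ioc
    intro x hx; exact (hgmid x (Ioc_subset_Icc_self hx)).symm
  have intIic1 : IntegrableOn g (Iic 1) := by
    rw [← Iic_union_Ioc_eq_Iic (by norm_num : (-1 : ℝ) ≤ 1)]
    exact intLeft.union intMid
  -- integral over Iic (-1)
  have hI1 : ∫ x in Iic (-1 : ℝ), g x = 0 :=
    setIntegral_eq_zero_of_forall_eq_zero hg0
  -- interval integral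
  have hIntv : ∫ x in (-1 : ℝ)..1, g x =
      (Real.sinh (4 * a) / (4 * a) - Real.sin (4 * b) / (4 * b)) / N := by
    have hcongr : ∫ x in (-1 : ℝ)..1, g x = ∫ x in (-1 : ℝ)..1,
        (Real.sinh (a * (x + 1)) ^ 2 + Real.sin (b * (x + 1)) ^ 2) / N := by
      apply intervalIntegral.integral_congr
      intro x hx
      rw [uIcc_of_le (by norm_num : (-1 : ℝ) ≤ 1)] at hx
      exact hgmid x hx
    rw [hcongr, intervalIntegral.integral_div]
    congr 1
    have hFTC : (∫ x in (-1 : ℝ)..1,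
        (Real.sinh (a * (x + 1)) ^ 2 + Real.sin (b * (x + 1)) ^ 2)) =
        (Real.sinh (2 * (a * ((1:ℝ) + 1))) / (4 * a)
          - Real.sin (2 * (b * ((1:ℝ) + 1))) / (4 * b)) -
        (Real.sinh (2 * (a * ((-1:ℝ) + 1))) / (4 * a)
          - Real.sin (2 * (b * ((-1:ℝ) + 1))) / (4 * b)) := by
      refine intervalIntegral.integral_eq_sub_of_hasDerivAt
        (f := fun x : ℝ => Real.sinh (2 * (a * (x + 1))) / (4 * a)
          - Real.sin (2 * (b * (x + 1))) / (4 * b)) ?_ ?_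
      · intro x _
        have hlina : HasDerivAt (fun y : ℝ => 2 * (a * (y + 1))) (2 * a) x := by
          simpa [mul_comm, mul_assoc, mul_left_comm] using
            (((hasDerivAt_id x).add_const 1).const_mul (2 * a))
        have hlinb : HasDerivAt (fun y : ℝ => 2 * (b * (y + 1))) (2 * b) x := by
          simpa [mul_comm, mul_assoc, mul_left_comm] using
            (((hasDerivAt_id x).add_const 1).const_mul (2 * b))
        have h1 := ((Real.hasDerivAt_sinh (2 * (a * (x + 1)))).comp x hlina).div_const (4 * a)
        have h2 := ((Real.hasDerivAt_sin (2 * (b * (x + 1)))).comp x hlinb).div_const (4 * b)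
        have h3 := h1.sub h2
        convert h3 using 1
        · rfl
        rw [Real.cosh_two_mul, Real.cos_two_mul]
        have e1 := Real.sin_sq_add_cos_sq (b * (x + 1))
        have e2 := Real.cosh_sq (a * (x + 1))
        field_simp
        linear_combination (-2) * e2 + 4 * Real.sin_sq_add_cos_sq ((x + 1) * b)
      · exact (by fun_prop :
          Continuous fun x : ℝ =>
            Real.sinh (a * (x + 1)) ^ 2 + Real.sin (b * (x + 1)) ^ 2).intervalIntegrable _ _
    rw [hFTC]
    norm_num
    rw [show 2 * (a * 2) = 4 * a by ring, show 2 * (b * 2) = 4 * b by ring]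
  -- integral over Ioi 1
  have hIoi : ∫ x in Ioi (1 : ℝ), g x = 1 / (2 * a) := by
    rw [setIntegral_congr_fun measurableSet_Ioi hgright]
    have hFTC := MeasureTheory.integral_Ioi_of_hasDerivAt_of_tendsto'
      (f := fun x : ℝ => -(Real.exp (2 * a) * Real.exp (-(2 * a) * x)) / (2 * a))
      (f' := fun x : ℝ => Real.exp (2 * a) * Real.exp (-(2 * a) * x)) (a := 1) (m := 0)
      ?_ ?_ ?_
    · rw [hFTC, mul_one, ← Real.exp_add,
        show 2 * a + -(2 * a) = 0 by ring, Real.exp_zero]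
      ring
    · intro x _
      have h0 : HasDerivAt (fun y : ℝ => -(2 * a) * y) (-(2 * a)) x := by
        simpa using (hasDerivAt_id x).const_mul (-(2 * a))
      have h1 := (Real.hasDerivAt_exp (-(2 * a) * x)).comp x h0
      have h2 := ((h1.const_mul (Real.exp (2 * a))).div_const (2 * a)).neg
      convert h2 using 1
      · ext y; simp [Function.comp, neg_div]
      · rw [← neg_div, eq_div_iff (by positivity : (0:ℝ) < 2 * a).ne']
        ring
    · exact (exp_neg_integrableOn_Ioi 1 (by positivity : (0:ℝ) < 2 * a)).const_mul _
    · have h2 : Tendsto (fun x : ℝ => (2 * a) * x) atTop atTop :=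
        Tendsto.const_mul_atTop (by positivity) tendsto_id
      have h3 : Tendsto (fun x : ℝ => -(2 * a) * x) atTop atBot := by
        simpa [neg_mul] using tendsto_neg_atBot_iff.mpr h2
      have h4 : Tendsto (fun x : ℝ => Real.exp (-(2 * a) * x)) atTop (𝓝 0) :=
        Real.tendsto_exp_atBot.comp h3
      have h5 := ((h4.const_mul (Real.exp (2 * a))).neg).div_const (2 * a)
      simpa using h5
  have hIic : ∫ x in Iic (1 : ℝ), g x =
      (Real.sinh (4 * a) / (4 * a) - Real.sin (4 * b) / (4 * b)) / N := by
    have := intervalIntegral.integral_Iic_sub_Iic intLeft intIic1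
    rw [hI1, sub_zero] at this
    rw [this, hIntv]
  have htotal : (∫ x : ℝ, g x) =
      (Real.sinh (4 * a) / (4 * a) - Real.sin (4 * b) / (4 * b)) / N + 1 / (2 * a) := by
    rw [← intervalIntegral.integral_Iic_add_Ioi intIic1 intRight, hIic, hIoi]
  constructor
  · rw [htotal]
    rw [div_add_div _ _ (by positivity) (by positivity)] at *
    field_simp
    ring
  · have := MeasureTheory.integral_neg_eq_self (μ := volume) (fun x => ‖phiP ζ x‖ ^ 2)
    simpa [phiM] using this
end

section
/- There exist constants C > 0 and γ₀ > 0 such that for every complex number ζ = γ + iδ with γ = Re ζ ≥ γ₀ one has |‖φ_ζ^+‖² − γ^{−1}| ≤ C e^{−4γ} and |⟨φ_ζ^+, φ_ζ^−⟩| ≤ C e^{−2γ}. -/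
/-!
On `[-1, 1]` one has `|sinh (ζ (x + 1))|² = (cosh (2γ (x + 1)) - cos (2δ (x + 1))) / 2`, so
`‖φ_ζ^+‖²` is computed in closed form up to the bounded oscillatory term `∫₀² cos (2δt) dt`:
the middle piece gives `(sinh 4γ / (2γ) - O(1)) / (2 |sinh 2ζ|²)` and the exponential tail
gives `1 / (2γ)`. As `2 |sinh 2ζ|² = cosh 4γ - cos 4δ` and `sinh 4γ - cosh 4γ = -e^{-4γ}`, the
difference with `1 / γ` is `O(1) / |sinh 2ζ|² = O(e^{-4γ})`. The product `conj φ_ζ^+ · φ_ζ^-` is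
supported in `[-1, 1]`, where `|sinh w| ≤ e^{|Re w|}` bounds it by `e^{2γ} / |sinh 2ζ|²`,
which is `O(e^{-2γ})`.
-/

open Set Filter

open MeasureTheory

namespace Complex

theorem normSq_sinh (z : ℂ) :
    normSq (sinh z) = (Real.cosh (2 * z.re) - Real.cos (2 * z.im)) / 2 := by
  have hz : sinh z = ((Real.sinh z.re * Real.cos z.im : ℝ) : ℂ) +
      ((Real.cosh z.re * Real.sin z.im : ℝ) : ℂ) * I := by
    conv_lhs => rw [← re_add_im z]
    push_cast
    rw [sinh_add, sinh_mul_I, cosh_mul_I, mul_assoc]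
  rw [hz, normSq_add_mul_I, Real.cosh_two_mul, Real.cos_two_mul']
  linear_combination (Real.sin z.im ^ 2 - 1 / 2) * Real.cosh_sq z.re +
    (Real.sinh z.re ^ 2 + 1 / 2) * Real.sin_sq_add_cos_sq z.im

theorem norm_sinh_le_exp_abs_re (z : ℂ) : ‖sinh z‖ ≤ Real.exp |z.re| := by
  calc ‖sinh z‖ = ‖exp z - exp (-z)‖ / 2 := by
        rw [sinh, norm_div, Complex.norm_ofNat]
    _ ≤ (Real.exp z.re + Real.exp (-z.re)) / 2 := by
        gcongr
        simpa [norm_exp] using norm_sub_le (exp z) (exp (-z))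
    _ ≤ Real.exp |z.re| := by
        have h₁ := Real.exp_le_exp.2 (le_abs_self z.re)
        have h₂ := Real.exp_le_exp.2 (neg_le_abs z.re)
        linarith

theorem exp_le_eight_mul_normSq_sinh {z : ℂ} (hz : 4 ≤ Real.exp (2 * z.re)) :
    Real.exp (2 * z.re) ≤ 8 * normSq (sinh z) := by
  rw [normSq_sinh, Real.cosh_eq]
  linarith [Real.exp_pos (-(2 * z.re)), Real.cos_le_one (2 * z.im)]

theorem norm_sinh_mul_ofReal_le {ζ : ℂ} (hζ : 0 ≤ ζ.re) {t : ℝ} (ht : 0 ≤ t) :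
    ‖sinh (ζ * t)‖ ≤ Real.exp (ζ.re * t) := by
  have h := norm_sinh_le_exp_abs_re (ζ * t)
  rwa [re_mul_ofReal, abs_of_nonneg (mul_nonneg hζ ht)] at h

end Complex

theorem exp_four_mul_re_le_eight_mul_normSq_sinh_two_mul {ζ : ℂ} (hζ : 1 ≤ ζ.re) :
    Real.exp (4 * ζ.re) ≤ 8 * Complex.normSq (Complex.sinh (2 * ζ)) := by
  have hre : 2 * (2 * ζ).re = 4 * ζ.re := by
    simp only [Complex.mul_re, Complex.re_ofNat, Complex.im_ofNat, zero_mul, sub_zero]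
    ring
  rw [← hre]
  exact Complex.exp_le_eight_mul_normSq_sinh
    (by rw [hre]; linarith [Real.add_one_le_exp (4 * ζ.re)])

theorem two_mul_normSq_sinh_two_mul (ζ : ℂ) :
    2 * Complex.normSq (Complex.sinh (2 * ζ)) = Real.cosh (4 * ζ.re) - Real.cos (4 * ζ.im) := by
  simp only [Complex.normSq_sinh, Complex.mul_re, Complex.re_ofNat, Complex.im_ofNat, zero_mul,
    sub_zero, Complex.mul_im, add_zero]
  ring_nf

theorem integral_cosh_mul {c : ℝ} (hc : c ≠ 0) (L : ℝ) :
    ∫ t in (0 : ℝ)..L, Real.cosh (c * t) = Real.sinh (c * L) / c := by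
  have hderiv (t : ℝ) : HasDerivAt (fun t => Real.sinh (c * t) / c) (Real.cosh (c * t)) t := by
    have := ((Real.hasDerivAt_sinh _).comp t ((hasDerivAt_id t).const_mul c)).div_const c
    simpa [mul_div_cancel_right₀ _ hc] using this
  rw [intervalIntegral.integral_eq_sub_of_hasDerivAt (fun t _ => hderiv t)
    ((by fun_prop : Continuous fun t => Real.cosh (c * t)).intervalIntegrable _ _)]
  simp

theorem integral_normSq_sinh_mul {a : ℂ} (ha : a.re ≠ 0) (L : ℝ) :
    ∫ t in (0 : ℝ)..L, Complex.normSq (Complex.sinh (a * t)) =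
      (Real.sinh (2 * a.re * L) / (2 * a.re) - ∫ t in (0 : ℝ)..L, Real.cos (2 * a.im * t)) / 2 := by
  have h (t : ℝ) : Complex.normSq (Complex.sinh (a * t)) =
      (Real.cosh (2 * a.re * t) - Real.cos (2 * a.im * t)) / 2 := by
    rw [Complex.normSq_sinh]; simp [mul_assoc]
  simp_rw [h]
  rw [intervalIntegral.integral_div, intervalIntegral.integral_sub
    ((by fun_prop : Continuous _).intervalIntegrable _ _)
    ((by fun_prop : Continuous _).intervalIntegrable _ _),
    integral_cosh_mul (by positivity)]

theorem integral_eq_intervalIntegral_add_integral_Ioi {E : Type*} [NormedAddCommGroup E]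
    [NormedSpace ℝ E] {f : ℝ → E} {a b : ℝ} (hab : a ≤ b) (hf : ∀ x ≤ a, f x = 0)
    (hf_ab : IntervalIntegrable f volume a b) (hf_Ioi : IntegrableOn f (Ioi b)) :
    ∫ x, f x = (∫ x in a..b, f x) + ∫ x in Ioi b, f x := by
  have hf_Iic_a : IntegrableOn f (Iic a) := integrableOn_zero.congr_fun
    (fun x hx => (hf x hx).symm) measurableSet_Iic
  have hf_Iic_b : IntegrableOn f (Iic b) := by
    rw [← Iic_union_Ioc_eq_Iic hab]
    exact hf_Iic_a.union hf_ab.1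
  rw [← intervalIntegral.integral_Iic_add_Ioi hf_Iic_b hf_Ioi,
    ← intervalIntegral.integral_Iic_sub_Iic hf_Iic_a hf_Iic_b,
    setIntegral_eq_zero_of_forall_eq_zero (t := Iic a) fun x hx => hf x hx, sub_zero]

section phi

variable (ζ : ℂ) {x : ℝ}

theorem phiP_of_le_neg_one (hx : x ≤ -1) : phiP ζ x = 0 := by
  rcases hx.lt_or_eq with hx | rfl
  · simp [phiP, hx]
  · simp [phiP]

theorem phiP_of_mem_Icc (hx : x ∈ Icc (-1) 1) :
    phiP ζ x = Complex.sinh (ζ * (x + 1)) / Complex.sinh (2 * ζ) := by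
  simp [phiP, hx.1.not_gt, hx.2]

theorem phiP_of_one_lt (hx : 1 < x) : phiP ζ x = Complex.exp (-ζ * (x - 1)) := by
  simp [phiP, (by linarith : ¬ x < -1), hx.not_ge]

theorem phiM_of_one_le (hx : 1 ≤ x) : phiM ζ x = 0 :=
  phiP_of_le_neg_one ζ (by linarith)

theorem norm_phiP_sq_of_one_lt (hx : 1 < x) :
    ‖phiP ζ x‖ ^ 2 = Real.exp (2 * ζ.re) * Real.exp (-(2 * ζ.re) * x) := by
  rw [phiP_of_one_lt ζ hx, Complex.norm_exp, ← Real.exp_nat_mul, ← Real.exp_add]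
  congr 1
  simp only [Nat.cast_ofNat, neg_mul, Complex.neg_re, Complex.mul_re, Complex.sub_re,
    Complex.ofReal_re, Complex.one_re, Complex.sub_im, Complex.ofReal_im, Complex.one_im, sub_self,
    mul_zero, sub_zero, mul_neg]
  ring

theorem eqOn_norm_phiP_sq : EqOn (fun x => ‖phiP ζ x‖ ^ 2)
    (fun x => Complex.normSq (Complex.sinh (ζ * ↑(x + 1))) / Complex.normSq (Complex.sinh (2 * ζ)))
    (Icc (-1) 1) := by
  intro x hx
  simp only [phiP_of_mem_Icc ζ hx, norm_div, div_pow, Complex.sq_norm]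
  push_cast
  rfl

theorem intervalIntegrable_norm_phiP_sq :
    IntervalIntegrable (fun x => ‖phiP ζ x‖ ^ 2) volume (-1) 1 := by
  refine (intervalIntegrable_congr ((eqOn_norm_phiP_sq ζ).mono ?_)).2
    ((by fun_prop : Continuous _).intervalIntegrable _ _)
  rw [uIoc_of_le (by norm_num)]
  exact Ioc_subset_Icc_self

theorem intervalIntegral_norm_phiP_sq :
    ∫ x in (-1 : ℝ)..1, ‖phiP ζ x‖ ^ 2 =
      (∫ t in (0 : ℝ)..2, Complex.normSq (Complex.sinh (ζ * t))) /
        Complex.normSq (Complex.sinh (2 * ζ)) := by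
  rw [intervalIntegral.integral_congr
      ((eqOn_norm_phiP_sq ζ).mono (uIcc_of_le (by norm_num)).subset),
    intervalIntegral.integral_div,
    intervalIntegral.integral_comp_add_right (fun t => Complex.normSq (Complex.sinh (ζ * t)))]
  norm_num

end phi

theorem integral_Ioi_norm_phiP_sq {ζ : ℂ} (hζ : 0 < ζ.re) :
    ∫ x in Ioi 1, ‖phiP ζ x‖ ^ 2 = 1 / (2 * ζ.re) := by
  rw [setIntegral_congr_fun measurableSet_Ioi fun x hx => norm_phiP_sq_of_one_lt ζ hx,
    integral_const_mul, integral_exp_mul_Ioi (by linarith), mul_one]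
  field_simp
  rw [← Real.exp_add]
  simp

theorem integrableOn_Ioi_norm_phiP_sq {ζ : ℂ} (hζ : 0 < ζ.re) :
    IntegrableOn (fun x => ‖phiP ζ x‖ ^ 2) (Ioi 1) :=
  IntegrableOn.congr_fun ((integrableOn_exp_mul_Ioi (by linarith) 1).const_mul _)
    (fun x hx => (norm_phiP_sq_of_one_lt ζ hx).symm) measurableSet_Ioi

theorem integral_norm_phiP_sq {ζ : ℂ} (hζ : 0 < ζ.re) :
    ∫ x, ‖phiP ζ x‖ ^ 2 = (Real.sinh (4 * ζ.re) / (2 * ζ.re) -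
      ∫ t in (0 : ℝ)..2, Real.cos (2 * ζ.im * t)) / (2 * Complex.normSq (Complex.sinh (2 * ζ))) +
      1 / (2 * ζ.re) := by
  rw [integral_eq_intervalIntegral_add_integral_Ioi (by norm_num)
      (fun x hx => by simp [phiP_of_le_neg_one ζ hx]) (intervalIntegrable_norm_phiP_sq ζ)
      (integrableOn_Ioi_norm_phiP_sq hζ),
    intervalIntegral_norm_phiP_sq, integral_normSq_sinh_mul hζ.ne', integral_Ioi_norm_phiP_sq hζ]
  ring_nf

theorem abs_integral_norm_phiP_sq_sub_inv_le {ζ : ℂ} (hζ : 1 ≤ ζ.re) :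
    |(∫ x, ‖phiP ζ x‖ ^ 2) - ζ.re⁻¹| ≤ 12 * Real.exp (-(4 * ζ.re)) := by
  rw [integral_norm_phiP_sq (by linarith)]
  have hE := exp_four_mul_re_le_eight_mul_normSq_sinh_two_mul hζ
  have hN_eq := two_mul_normSq_sinh_two_mul ζ
  set γ := ζ.re
  set N := Complex.normSq (Complex.sinh (2 * ζ))
  set c := ∫ t in (0 : ℝ)..2, Real.cos (2 * ζ.im * t)
  have hγ : 0 < γ := by linarith
  have hN : 0 < N := by linarith [Real.exp_pos (4 * γ)]
  have hc : |c| ≤ 2 := by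
    simpa using intervalIntegral.norm_integral_le_of_norm_le_const (a := 0) (b := 2) (C := 1)
      fun t _ => (Real.norm_eq_abs _).trans_le (Real.abs_cos_le_one (2 * ζ.im * t))
  have hnum : |Real.cos (4 * ζ.im) - Real.exp (-(4 * γ)) - 2 * γ * c| ≤ 6 * γ := by
    have := Real.exp_le_one_iff.2 (by linarith : -(4 * γ) ≤ 0)
    rw [abs_le] at hc ⊢
    constructor <;> nlinarith [Real.neg_one_le_cos (4 * ζ.im), Real.cos_le_one (4 * ζ.im),
      Real.exp_pos (-(4 * γ))]
  have hkey : (Real.sinh (4 * γ) / (2 * γ) - c) / (2 * N) + 1 / (2 * γ) - γ⁻¹ =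
      (Real.cos (4 * ζ.im) - Real.exp (-(4 * γ)) - 2 * γ * c) / (4 * γ * N) := by
    field_simp
    linear_combination 4 * Real.sinh_sub_cosh (4 * γ) - 4 * hN_eq
  have hden : 0 < 4 * γ * N := by positivity
  rw [hkey, abs_div, abs_of_pos hden, div_le_iff₀ hden]
  calc _ ≤ 6 * γ := hnum
    _ = 6 * γ * Real.exp (4 * γ) * Real.exp (-(4 * γ)) := by
      rw [mul_assoc, ← Real.exp_add, add_neg_cancel, Real.exp_zero, mul_one]
    _ ≤ 6 * γ * (8 * N) * Real.exp (-(4 * γ)) := by gcongr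
    _ = 12 * Real.exp (-(4 * γ)) * (4 * γ * N) := by ring

theorem norm_integral_conj_phiP_mul_phiM_le {ζ : ℂ} (hζ : 0 ≤ ζ.re) :
    ‖∫ x, starRingEnd ℂ (phiP ζ x) * phiM ζ x‖ ≤
      2 * Real.exp (2 * ζ.re) / Complex.normSq (Complex.sinh (2 * ζ)) := by
  have hsupp : ∀ x ∉ Ioc (-1 : ℝ) 1, starRingEnd ℂ (phiP ζ x) * phiM ζ x = 0 := by
    intro x hx
    rcases not_and_or.1 hx with hx | hx
    · simp [phiP_of_le_neg_one ζ (not_lt.1 hx)]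
    · simp [phiM_of_one_le ζ (not_le.1 hx).le]
  rw [← setIntegral_eq_integral_of_forall_compl_eq_zero hsupp,
    ← intervalIntegral.integral_of_le (by norm_num)]
  refine (intervalIntegral.norm_integral_le_of_norm_le_const
    (C := Real.exp (2 * ζ.re) / Complex.normSq (Complex.sinh (2 * ζ))) fun x hx => ?_).trans_eq
    (by norm_num; ring)
  rw [uIoc_of_le (by norm_num)] at hx
  have hx_mem := Ioc_subset_Icc_self hx
  have hnx_mem : -x ∈ Icc (-1 : ℝ) 1 := ⟨by linarith [hx_mem.2], by linarith [hx_mem.1]⟩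
  rw [phiM, phiP_of_mem_Icc ζ hx_mem, phiP_of_mem_Icc ζ hnx_mem, norm_mul, Complex.norm_conj,
    norm_div, norm_div, div_mul_div_comm, ← sq, Complex.sq_norm]
  refine div_le_div_of_nonneg_right ?_ (Complex.normSq_nonneg _)
  have h₁ := Complex.norm_sinh_mul_ofReal_le hζ (t := x + 1) (by linarith [hx_mem.1])
  have h₂ := Complex.norm_sinh_mul_ofReal_le hζ (t := -x + 1) (by linarith [hx_mem.2])
  push_cast at h₁ h₂ ⊢
  calc _ ≤ Real.exp (ζ.re * (x + 1)) * Real.exp (ζ.re * (-x + 1)) := by gcongr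
    _ = Real.exp (2 * ζ.re) := by rw [← Real.exp_add]; ring_nf

theorem norm_integral_conj_phiP_mul_phiM_le_exp {ζ : ℂ} (hζ : 1 ≤ ζ.re) :
    ‖∫ x, starRingEnd ℂ (phiP ζ x) * phiM ζ x‖ ≤ 16 * Real.exp (-(2 * ζ.re)) := by
  have hE := exp_four_mul_re_le_eight_mul_normSq_sinh_two_mul hζ
  have hN : 0 < Complex.normSq (Complex.sinh (2 * ζ)) := by linarith [Real.exp_pos (4 * ζ.re)]
  refine (norm_integral_conj_phiP_mul_phiM_le (by linarith)).trans ?_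
  rw [div_le_iff₀ hN]
  calc 2 * Real.exp (2 * ζ.re)
      = 2 * Real.exp (-(2 * ζ.re)) * Real.exp (4 * ζ.re) := by
        rw [mul_assoc, ← Real.exp_add]; ring_nf
    _ ≤ 2 * Real.exp (-(2 * ζ.re)) * (8 * Complex.normSq (Complex.sinh (2 * ζ))) := by gcongr
    _ = 16 * Real.exp (-(2 * ζ.re)) * Complex.normSq (Complex.sinh (2 * ζ)) := by ring

theorem stmt4 :
    ∃ C > (0 : ℝ), ∃ γ₀ > (0 : ℝ), ∀ ζ : ℂ, γ₀ ≤ ζ.re →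
      |(∫ x : ℝ, ‖phiP ζ x‖ ^ 2) - (ζ.re)⁻¹| ≤ C * Real.exp (-(4 * ζ.re)) ∧
      ‖∫ x : ℝ, (starRingEnd ℂ) (phiP ζ x) * phiM ζ x‖ ≤
        C * Real.exp (-(2 * ζ.re)) := by
  refine ⟨16, by norm_num, 1, one_pos, fun ζ hζ => ⟨?_, norm_integral_conj_phiP_mul_phiM_le_exp hζ⟩⟩
  exact (abs_integral_norm_phiP_sq_sub_inv_le hζ).trans
    (mul_le_mul_of_nonneg_right (by norm_num) (Real.exp_nonneg _))
end

section
/- There exist constants C > 0 and γ₀ > 0 such that for every complex number ζ = γ + iδ with γ = Re ζ ≥ γ₀ one has ‖φ_ζ^{∘,+} − φ_ζ^+‖ ≤ C e^{−γ} and ‖φ_ζ^{∘,−} − φ_ζ^−‖ ≤ C e^{−γ}, where the norm is that of L²(ℝ). -/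
open Set Filter

/-- The function `φ_ζ^{∘,+}`. -/
noncomputable def phiCP (ζ : ℂ) (x : ℝ) : ℂ :=
  if x < 0 then 0
  else if x ≤ 1 then Complex.sinh (ζ * x) / Complex.sinh ζ
  else Complex.exp (-ζ * (x - 1))

/-- The function `φ_ζ^{∘,−}(x) = φ_ζ^{∘,+}(−x)`. -/
noncomputable def phiCM (ζ : ℂ) (x : ℝ) : ℂ := phiCP ζ (-x)

lemma norm_sinh_le (w : ℂ) : ‖Complex.sinh w‖ ≤ Real.exp |w.re| := by
  have h : Complex.sinh w = (Complex.exp w - Complex.exp (-w)) / 2 := rfl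
  rw [h]
  have h1 : ‖Complex.exp w - Complex.exp (-w)‖ ≤ Real.exp w.re + Real.exp (-w.re) := by
    calc ‖Complex.exp w - Complex.exp (-w)‖ ≤ ‖Complex.exp w‖ + ‖Complex.exp (-w)‖ :=
          norm_sub_le _ _
      _ = Real.exp w.re + Real.exp (-w.re) := by
          simp [Complex.norm_exp]
  have e1 : Real.exp w.re ≤ Real.exp |w.re| := Real.exp_le_exp.2 (le_abs_self _)
  have e2 : Real.exp (-w.re) ≤ Real.exp |w.re| := Real.exp_le_exp.2 (neg_le_abs _)
  rw [norm_div]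
  norm_num
  linarith

lemma sinh_re_le (w : ℂ) : Real.sinh w.re ≤ ‖Complex.sinh w‖ := by
  have h : Complex.sinh w = (Complex.exp w - Complex.exp (-w)) / 2 := rfl
  rw [h, norm_div]
  have h1 : ‖Complex.exp w‖ - ‖Complex.exp (-w)‖ ≤ ‖Complex.exp w - Complex.exp (-w)‖ :=
    norm_sub_norm_le _ _
  have h2 : ‖Complex.exp w‖ = Real.exp w.re := by simp [Complex.norm_exp]
  have h3 : ‖Complex.exp (-w)‖ = Real.exp (-w.re) := by simp [Complex.norm_exp]
  have h4 : ‖(2:ℂ)‖ = 2 := by norm_num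
  rw [Real.sinh_eq, h4]
  rw [h2, h3] at h1
  linarith

lemma sinh2_lb (ζ : ℂ) (hγ : 1 ≤ ζ.re) :
    Real.exp (2 * ζ.re) / 4 ≤ ‖Complex.sinh (2 * ζ)‖ := by
  have h1 : Real.sinh ((2*ζ).re) ≤ ‖Complex.sinh (2*ζ)‖ := sinh_re_le _
  have h2 : (2*ζ : ℂ).re = 2 * ζ.re := by simp
  rw [h2, Real.sinh_eq] at h1
  have h3 : Real.exp (-(2*ζ.re)) ≤ 1 := Real.exp_le_one_iff.2 (by linarith)
  have h4 : (2:ℝ) ≤ Real.exp (2*ζ.re) := by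
    have := Real.add_one_le_exp (2*ζ.re); linarith
  linarith

lemma quot_bound (ζ : ℂ) (hγ : 1 ≤ ζ.re) (w : ℂ) (hw : |w.re| ≤ ζ.re) :
    ‖Complex.sinh w / Complex.sinh (2*ζ)‖ ≤ 4 * Real.exp (-ζ.re) := by
  have hD := sinh2_lb ζ hγ
  have hDpos : 0 < ‖Complex.sinh (2*ζ)‖ := lt_of_lt_of_le (by positivity) hD
  have hN : ‖Complex.sinh w‖ ≤ Real.exp ζ.re :=
    (norm_sinh_le w).trans (Real.exp_le_exp.2 hw)
  rw [norm_div, div_le_iff₀ hDpos]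
  have key : Real.exp (-ζ.re) * Real.exp (2*ζ.re) = Real.exp ζ.re := by
    rw [← Real.exp_add]; ring_nf
  nlinarith [Real.exp_pos (-ζ.re)]

lemma key_bound (ζ : ℂ) (hγ : 1 ≤ ζ.re) (x : ℝ) :
    ‖phiCP ζ x - phiP ζ x‖ ≤
      Set.indicator (Icc (-1:ℝ) 1) (fun _ => 4 * Real.exp (-ζ.re)) x := by
  by_cases hx1 : x < -1
  · rw [Set.indicator_of_notMem (by simp [Set.mem_Icc]; intro h; linarith)]
    have hA : phiCP ζ x = 0 := if_pos (by linarith : x < 0)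
    have hB : phiP ζ x = 0 := if_pos hx1
    rw [hA, hB]
    simp
  · push_neg at hx1
    by_cases hx2 : x ≤ 1
    · rw [Set.indicator_of_mem (Set.mem_Icc.2 ⟨hx1, hx2⟩)]
      have hs2ζ : Complex.sinh (2*ζ) ≠ 0 := by
        intro h
        have h1 : Real.sinh (2*ζ.re) ≤ ‖Complex.sinh (2*ζ)‖ := by
          simpa using sinh_re_le (2*ζ)
        rw [h, norm_zero] at h1
        have : (0:ℝ) < Real.sinh (2*ζ.re) := Real.sinh_pos_iff.2 (by linarith)
        linarith
      by_cases hx0 : x < 0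
      · have hA : phiCP ζ x = 0 := if_pos hx0
        have hB : phiP ζ x = Complex.sinh (ζ * ((x:ℂ) + 1)) / Complex.sinh (2 * ζ) := by
          rw [phiP, if_neg (by linarith), if_pos hx2]
        rw [hA, hB, zero_sub, norm_neg]
        refine quot_bound ζ hγ _ ?_
        have hre : (ζ * ((x:ℂ) + 1)).re = ζ.re * (x + 1) := by
          simp [Complex.mul_re]
        rw [hre, abs_of_nonneg (by nlinarith)]
        nlinarith
      · push_neg at hx0
        have hA : phiCP ζ x = Complex.sinh (ζ * (x:ℂ)) / Complex.sinh ζ := by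
          rw [phiCP, if_neg (by linarith), if_pos hx2]
        have hB : phiP ζ x = Complex.sinh (ζ * ((x:ℂ) + 1)) / Complex.sinh (2 * ζ) := by
          rw [phiP, if_neg (by linarith), if_pos hx2]
        rw [hA, hB]
        have hsζ : Complex.sinh ζ ≠ 0 := by
          intro h
          have h1 := sinh_re_le ζ
          rw [h, norm_zero] at h1
          have : (0:ℝ) < Real.sinh ζ.re := Real.sinh_pos_iff.2 (by linarith)
          linarith
        have hid : Complex.sinh (ζ*x) / Complex.sinh ζ - Complex.sinh (ζ*((x:ℂ)+1)) / Complex.sinh (2*ζ)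
            = Complex.sinh (ζ*((x:ℂ)-1)) / Complex.sinh (2*ζ) := by
          have e1 : (ζ*((x:ℂ)+1)) = ζ*x + ζ := by ring
          have e2 : (ζ*((x:ℂ)-1)) = ζ*x - ζ := by ring
          have hnum : Complex.sinh (ζ*x) * Complex.sinh (2*ζ) -
              Complex.sinh ζ * Complex.sinh (ζ*x + ζ) =
              Complex.sinh ζ * Complex.sinh (ζ*x - ζ) := by
            rw [Complex.sinh_two_mul, Complex.sinh_add, Complex.sinh_sub]; ring
          rw [e1, e2, div_sub_div _ _ hsζ hs2ζ, hnum, mul_div_mul_left _ _ hsζ]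
        rw [hid]
        refine quot_bound ζ hγ _ ?_
        have hre : (ζ * ((x:ℂ) - 1)).re = ζ.re * (x - 1) := by
          simp [Complex.mul_re]
        rw [hre, abs_of_nonpos (by nlinarith)]
        nlinarith
    · push_neg at hx2
      rw [Set.indicator_of_notMem (by simp [Set.mem_Icc]; intro h; linarith)]
      have hA : phiCP ζ x = Complex.exp (-ζ * ((x:ℂ) - 1)) := by
        rw [phiCP, if_neg (by linarith), if_neg (by linarith)]
      have hB : phiP ζ x = Complex.exp (-ζ * ((x:ℂ) - 1)) := by
        rw [phiP, if_neg (by linarith), if_neg (by linarith)]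
      rw [hA, hB]
      simp

lemma int_bound (ζ : ℂ) (hγ : 1 ≤ ζ.re) :
    Real.sqrt (∫ x : ℝ, ‖phiCP ζ x - phiP ζ x‖ ^ 2) ≤ 6 * Real.exp (-ζ.re) := by
  set c : ℝ := 4 * Real.exp (-ζ.re) with hc
  have hc0 : 0 ≤ c := by positivity
  have hInt : MeasureTheory.Integrable
      (Set.indicator (Icc (-1:ℝ) 1) (fun _ => c ^ 2)) := by
    rw [MeasureTheory.integrable_indicator_iff measurableSet_Icc]
    exact MeasureTheory.integrableOn_const measure_Icc_lt_top.ne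
  have hle : ∀ x : ℝ, ‖phiCP ζ x - phiP ζ x‖ ^ 2 ≤
      Set.indicator (Icc (-1:ℝ) 1) (fun _ => c ^ 2) x := by
    intro x
    have h := key_bound ζ hγ x
    by_cases hx : x ∈ Icc (-1:ℝ) 1
    · rw [Set.indicator_of_mem hx] at h ⊢
      exact pow_le_pow_left₀ (norm_nonneg _) h 2
    · rw [Set.indicator_of_notMem hx] at h ⊢
      have : ‖phiCP ζ x - phiP ζ x‖ = 0 := le_antisymm h (norm_nonneg _)
      rw [this]; norm_num
  have hmono : (∫ x : ℝ, ‖phiCP ζ x - phiP ζ x‖ ^ 2) ≤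
      ∫ x : ℝ, Set.indicator (Icc (-1:ℝ) 1) (fun _ => c ^ 2) x :=
    MeasureTheory.integral_mono_of_nonneg
      (Filter.Eventually.of_forall fun x => by positivity) hInt
      (Filter.Eventually.of_forall hle)
  have hval : (∫ x : ℝ, Set.indicator (Icc (-1:ℝ) 1) (fun _ => c ^ 2) x) = 2 * c ^ 2 := by
    rw [MeasureTheory.integral_indicator_const (c^2) measurableSet_Icc]
    simp [Real.volume_Icc]
    norm_num
  rw [hval] at hmono
  have h36 : 2 * c ^ 2 ≤ (6 * Real.exp (-ζ.re)) ^ 2 := by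
    rw [hc]; nlinarith [Real.exp_pos (-ζ.re)]
  calc Real.sqrt (∫ x : ℝ, ‖phiCP ζ x - phiP ζ x‖ ^ 2)
      ≤ Real.sqrt ((6 * Real.exp (-ζ.re)) ^ 2) :=
        Real.sqrt_le_sqrt (hmono.trans h36)
    _ = 6 * Real.exp (-ζ.re) := Real.sqrt_sq (by positivity)

theorem stmt8 :
    ∃ C > (0 : ℝ), ∃ γ₀ > (0 : ℝ), ∀ ζ : ℂ, γ₀ ≤ ζ.re →
      Real.sqrt (∫ x : ℝ, ‖phiCP ζ x - phiP ζ x‖ ^ 2) ≤ C * Real.exp (-ζ.re) ∧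
      Real.sqrt (∫ x : ℝ, ‖phiCM ζ x - phiM ζ x‖ ^ 2) ≤ C * Real.exp (-ζ.re) := by
  refine ⟨6, by norm_num, 1, by norm_num, fun ζ hγ => ⟨int_bound ζ hγ, ?_⟩⟩
  have h : (∫ x : ℝ, ‖phiCM ζ x - phiM ζ x‖ ^ 2) =
      ∫ x : ℝ, ‖phiCP ζ x - phiP ζ x‖ ^ 2 := by
    have : (fun x : ℝ => ‖phiCM ζ x - phiM ζ x‖ ^ 2) =
        fun x : ℝ => (fun y : ℝ => ‖phiCP ζ y - phiP ζ y‖ ^ 2) (-x) := rfl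
    rw [this]
    exact MeasureTheory.integral_neg_eq_self (fun y : ℝ => ‖phiCP ζ y - phiP ζ y‖ ^ 2) MeasureTheory.volume
  rw [h]
  exact int_bound ζ hγ
end
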